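/- arXiv:cs/0202001 — 2 statements merged into one kernel-verified Lean document; each statement's English description precedes it below -/
import Mathlib

section
/- Let P and P' be positive choice programs with the same intensional rules, idb(P') = idb(P), and extensional databases satisfying edb(P') ⊇ edb(P). Then for every choice model M of P there exists a choice model M' of P' with M' ⊇ M; that is, positive choice programs define monotonic multi-valued mappings from their extensional to their intensional component. -/
/-!
# STATEMENT 2

Let `P` and `P'` be positive choice programs with the same intensional rules,
`idb(P') = idb(P)`, and extensional databases satisfying `edb(P') ⊇ edb(P)`.
Then for every choice model `M` of `P` there exists a choice model `M'` of
`P'` with `M' ⊇ M`: positive choice programs define monotonic multi-valued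
mappings from their extensional to their intensional component.

Here a program is presented as a pair of an intensional component (the list
`P` of rules, shared by both programs) and an extensional component (a set of
ground facts), and a *choice model* is a total stable model of the first-order
equivalent `foe`, obtained by the standard `chosen`/`diffChoice` rewriting of
the choice goals.  The framework is as in Statement 0.
-/

/-- A ground normal logic-program rule over ground atoms `α`. -/
structure GRule (α : Type) where
  head : α
  pos : Set α
  neg : Set α

/-- A ground normal logic program is a set of ground rules. -/
abbrev GProgram (α : Type) := Set (GRule α)

/-- `M` satisfies a ground rule. -/
def GRule.Sat {α : Type} (r : GRule α) (M : Set α) : Prop :=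
  r.pos ⊆ M → (∀ a ∈ r.neg, a ∉ M) → r.head ∈ M

/-- `M` is a model of (i.e. closed under) the program `P`. -/
def IsModel {α : Type} (P : GProgram α) (M : Set α) : Prop := ∀ r ∈ P, r.Sat M

/-- The Gelfond–Lifschitz reduct of `P` with respect to `M`: delete every rule
whose negative body intersects `M`, and delete the negative bodies of the
remaining rules. -/
def reduct {α : Type} (P : GProgram α) (M : Set α) : GProgram α :=
  {r | ∃ r' ∈ P, (∀ a ∈ r'.neg, a ∉ M) ∧ r = ⟨r'.head, r'.pos, ∅⟩}

/-- The least (Herbrand) model of a program: the intersection of all models. -/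
def leastModel {α : Type} (P : GProgram α) : Set α := ⋂₀ {N | IsModel P N}

/-- `M` is a (total, two-valued) stable model of `P` in the sense of
Gelfond–Lifschitz: `M` is the least model of the reduct of `P` by `M`.
Every such model is total: each atom is either true (in `M`) or false. -/
def IsStableModel {α : Type} (P : GProgram α) (M : Set α) : Prop :=
  M = leastModel (reduct P M)

/-! ## Datalog with choice goals -/

/-- Terms: variables (named by naturals) and constants from `C`. -/
inductive Term (C : Type) where
  | var (v : ℕ)
  | const (c : C)

/-- A relational schema: predicate symbols with arities. -/
structure Schema where
  pred : Type
  ar : pred → ℕ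

/-- A (possibly non-ground) atom over schema `S` and constants `C`. -/
structure Atom (S : Schema) (C : Type) where
  p : S.pred
  args : Fin (S.ar p) → Term C

/-- A ground atom. -/
structure GAtom (S : Schema) (C : Type) where
  p : S.pred
  args : Fin (S.ar p) → C

/-- A Datalog rule whose body may additionally contain choice goals
`choice((X),(Y))`, recorded in `cgoals` as pairs `(X, Y)` of disjoint lists of
variables, with nonempty right side `Y`. -/
structure CRule (S : Schema) (C : Type) where
  head : Atom S C
  pos : List (Atom S C)
  neg : List (Atom S C)
  cgoals : List (List ℕ × List ℕ)
  cgoals_disjoint : ∀ g ∈ cgoals, ∀ v ∈ g.1, v ∉ g.2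
  cgoals_right_ne : ∀ g ∈ cgoals, g.2 ≠ []

/-- A choice program: a finite list of rules, possibly with choice goals. -/
abbrev CProgram (S : Schema) (C : Type) := List (CRule S C)

/-- A choice program is *positive* when its non-choice goals contain no
negation. -/
def CProgram.Positive {S : Schema} {C : Type} (P : CProgram S C) : Prop :=
  ∀ r ∈ P, r.neg = []

def Term.eval {C : Type} (ν : ℕ → C) : Term C → C
  | .var v => ν v
  | .const c => c

def Atom.ground {S : Schema} {C : Type} (a : Atom S C) (ν : ℕ → C) : GAtom S C :=
  ⟨a.p, fun i => (a.args i).eval ν⟩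

/-- `W`: the list of all variables occurring in the choice goals of a rule. -/
def CRule.W {S : Schema} {C : Type} (r : CRule S C) : List ℕ :=
  (r.cgoals.flatMap fun g => g.1 ++ g.2).dedup

/-- Atoms of the first-order equivalent `foe(P)`: the original (base) atoms
together with `chosen_r` and `diffChoice_r` atoms for each choice rule `r`
(rules are referred to by their position in the program). -/
inductive FAtom (S : Schema) (C : Type) where
  | base (a : GAtom S C)
  | chosen (r : ℕ) (w : List C)
  | diff (r : ℕ) (w : List C)

/-- The (ground) positive body of an instantiated rule, as base atoms. -/
def posBody {S : Schema} {C : Type} (r : CRule S C) (ν : ℕ → C) : Set (FAtom S C) :=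
  {x | ∃ a ∈ r.pos, x = FAtom.base (a.ground ν)}

/-- The (ground) negative body of an instantiated rule, as base atoms. -/
def negBody {S : Schema} {C : Type} (r : CRule S C) (ν : ℕ → C) : Set (FAtom S C) :=
  {x | ∃ a ∈ r.neg, x = FAtom.base (a.ground ν)}

/-- The first-order equivalent `foe(P)` of a choice program `P` over the
database `edb`, given as the set of its ground instances:

* facts of the database;
* rules without choice goals, unchanged;
* for each choice rule `r : A ← B(Z), choice((X₁),(Y₁)), …, choice((Xₖ),(Yₖ))`:
  - `r′ : A ← B(Z), chosenᵣ(W)` where `W` lists all variables of the choice goals,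
  - `chosenᵣ(W) ← B(Z), ¬ diffChoiceᵣ(W)`,
  - for each choice goal `choice((Xᵢ),(Yᵢ))`:
    `diffChoiceᵣ(W) ← chosenᵣ(W′), Yᵢ ≠ Yᵢ′` where `W′` agrees with `W` on `Xᵢ`
    (all other variables being fresh primed copies). -/
def foe {S : Schema} {C : Type} (P : CProgram S C) (edb : Set (GAtom S C)) :
    GProgram (FAtom S C) :=
  {r | ∃ a ∈ edb, r = ⟨FAtom.base a, ∅, ∅⟩} ∪
  {r | ∃ i : Fin P.length, ∃ ν : ℕ → C, (P.get i).cgoals = [] ∧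
        r = ⟨FAtom.base ((P.get i).head.ground ν), posBody (P.get i) ν,
             negBody (P.get i) ν⟩} ∪
  {r | ∃ i : Fin P.length, ∃ ν : ℕ → C, (P.get i).cgoals ≠ [] ∧
        r = ⟨FAtom.base ((P.get i).head.ground ν),
             insert (FAtom.chosen i ((P.get i).W.map ν)) (posBody (P.get i) ν),
             negBody (P.get i) ν⟩} ∪
  {r | ∃ i : Fin P.length, ∃ ν : ℕ → C, (P.get i).cgoals ≠ [] ∧
        r = ⟨FAtom.chosen i ((P.get i).W.map ν), posBody (P.get i) ν,
             insert (FAtom.diff i ((P.get i).W.map ν)) (negBody (P.get i) ν)⟩} ∪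
  {r | ∃ i : Fin P.length, ∃ g ∈ (P.get i).cgoals, ∃ ν ν' : ℕ → C,
        (∀ v ∈ g.1, ν v = ν' v) ∧ (∃ v ∈ g.2, ν v ≠ ν' v) ∧
        r = ⟨FAtom.diff i ((P.get i).W.map ν),
             {FAtom.chosen i ((P.get i).W.map ν')}, ∅⟩}

/-- A choice model of the choice program with rules `P` and database `edb`:
a total stable model of its first-order equivalent. -/
def IsChoiceModel {S : Schema} {C : Type} (P : CProgram S C)
    (edb : Set (GAtom S C)) (M : Set (FAtom S C)) : Prop :=
  IsStableModel (foe P edb) M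

/-!
Once a set `A` of choices (pairs of a rule and a tuple of its choice variables) is fixed, the
first-order equivalent becomes a Horn program whose least model we call `hornModel A`. For a
positive program the only negative goals of `foe` are the `diffChoice` goals, so the reduct of
`foe` by `X` is the Horn program of the choices that `X` does not block, and `X` is a choice model
iff `X = hornModel (unblocked X)`.

The choices made by `M` are conflict-free and remain derivable over the larger database. By Zorn's
lemma they extend to a maximal conflict-free set `A` of choices that are all derivable in
`hornModel A`. A conflict-free `A` is never blocked by `hornModel A`, and by maximality every
unblocked choice whose body holds in `hornModel A` already lies in `A`; together these say that
`hornModel A` is a choice model, and it contains `M`.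
-/

open Set

section LeastModel

variable {α : Type} {P Q : GProgram α} {N : Set α}

theorem leastModel_subset (h : IsModel P N) : leastModel P ⊆ N :=
  sInter_subset_of_mem h

theorem isModel_union_iff : IsModel (P ∪ Q) N ↔ IsModel P N ∧ IsModel Q N := by
  simp only [IsModel, mem_union, or_imp, forall_and]

theorem GRule.Sat.head_mem {r : GRule α} (h : r.Sat N) (hneg : r.neg = ∅) (hpos : r.pos ⊆ N) :
    r.head ∈ N :=
  h hpos (by simp [hneg])

theorem isModel_leastModel (h : ∀ r ∈ P, r.neg = ∅) : IsModel P (leastModel P) := by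
  intro r hr hpos _
  rw [leastModel, mem_sInter]
  intro N hN
  exact (hN r hr).head_mem (h r hr) (hpos.trans (sInter_subset_of_mem hN))

theorem leastModel_induction (h : ∀ r ∈ P, r.neg = ∅) {p : α → Prop}
    (hp : ∀ r ∈ P, r.pos ⊆ leastModel P → (∀ a ∈ r.pos, p a) → p r.head) {a : α}
    (ha : a ∈ leastModel P) : p a := by
  refine (leastModel_subset (N := {a ∈ leastModel P | p a}) ?_ ha).2
  intro r hr hpos _
  have hpos' : r.pos ⊆ leastModel P := hpos.trans (sep_subset _ _)
  exact ⟨(isModel_leastModel h r hr).head_mem (h r hr) hpos',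
    hp r hr hpos' fun a ha => (hpos ha).2⟩

end LeastModel

theorem CRule.mem_W {S : Schema} {C : Type} {r : CRule S C} {g : List ℕ × List ℕ}
    (hg : g ∈ r.cgoals) {v : ℕ} (hv : v ∈ g.2) : v ∈ r.W := by
  rw [CRule.W, List.mem_dedup, List.mem_flatMap]
  exact ⟨g, hg, List.mem_append_right _ hv⟩

namespace CProgram

variable {S : Schema} {C : Type} (P : CProgram S C)

/-- The body of the `diffChoice` rules of rule `i`. -/
def Conflict (i : Fin P.length) (w w' : List C) : Prop :=
  ∃ g ∈ (P.get i).cgoals, ∃ ν ν' : ℕ → C,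
    w = (P.get i).W.map ν ∧ w' = (P.get i).W.map ν' ∧
    (∀ v ∈ g.1, ν v = ν' v) ∧ ∃ v ∈ g.2, ν v ≠ ν' v

def ConflictFree (A : Set (Fin P.length × List C)) : Prop :=
  ∀ i w w', (i, w) ∈ A → (i, w') ∈ A → ¬ P.Conflict i w w'

def chosenSet (X : Set (FAtom S C)) : Set (Fin P.length × List C) :=
  {p | FAtom.chosen p.1 p.2 ∈ X}

def unblocked (X : Set (FAtom S C)) : Set (Fin P.length × List C) :=
  {p | FAtom.diff p.1 p.2 ∉ X}

/-- The rules of `foe P edb` other than the `chosen` rules, with negative bodies dropped. -/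
def baseRules (edb : Set (GAtom S C)) : GProgram (FAtom S C) :=
  {r | ∃ a ∈ edb, r = ⟨FAtom.base a, ∅, ∅⟩} ∪
  {r | ∃ i : Fin P.length, ∃ ν : ℕ → C, (P.get i).cgoals = [] ∧
        r = ⟨FAtom.base ((P.get i).head.ground ν), posBody (P.get i) ν, ∅⟩} ∪
  {r | ∃ i : Fin P.length, ∃ ν : ℕ → C, (P.get i).cgoals ≠ [] ∧
        r = ⟨FAtom.base ((P.get i).head.ground ν),
             insert (FAtom.chosen i ((P.get i).W.map ν)) (posBody (P.get i) ν), ∅⟩} ∪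
  {r | ∃ i : Fin P.length, ∃ g ∈ (P.get i).cgoals, ∃ ν ν' : ℕ → C,
        (∀ v ∈ g.1, ν v = ν' v) ∧ (∃ v ∈ g.2, ν v ≠ ν' v) ∧
        r = ⟨FAtom.diff i ((P.get i).W.map ν), {FAtom.chosen i ((P.get i).W.map ν')}, ∅⟩}

def chosenRules (A : Set (Fin P.length × List C)) : GProgram (FAtom S C) :=
  {r | ∃ i : Fin P.length, ∃ ν : ℕ → C, (P.get i).cgoals ≠ [] ∧
        (i, (P.get i).W.map ν) ∈ A ∧
        r = ⟨FAtom.chosen i ((P.get i).W.map ν), posBody (P.get i) ν, ∅⟩}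

def hornModel (edb : Set (GAtom S C)) (A : Set (Fin P.length × List C)) : Set (FAtom S C) :=
  leastModel (P.baseRules edb ∪ P.chosenRules A)

def Admissible (edb : Set (GAtom S C)) (A : Set (Fin P.length × List C)) : Prop :=
  P.ConflictFree A ∧ A ⊆ P.chosenSet (P.hornModel edb A)

variable {P} {edb edb' : Set (GAtom S C)} {A B : Set (Fin P.length × List C)}

theorem Conflict.irrefl {i : Fin P.length} {w : List C} : ¬ P.Conflict i w w := by
  rintro ⟨g, hg, ν, ν', h, h', -, v, hv, hne⟩
  exact hne (List.map_eq_map_iff.mp (h.symm.trans h') v (CRule.mem_W hg hv))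

theorem Conflict.symm {i : Fin P.length} {w w' : List C} (h : P.Conflict i w w') :
    P.Conflict i w' w := by
  obtain ⟨g, hg, ν, ν', h, h', hagree, v, hv, hne⟩ := h
  exact ⟨g, hg, ν', ν, h', h, fun u hu => (hagree u hu).symm, v, hv, Ne.symm hne⟩

theorem ConflictFree.insert (hA : P.ConflictFree A) {i : Fin P.length} {w : List C}
    (hw : ∀ w', (i, w') ∈ A → ¬ P.Conflict i w w') : P.ConflictFree (insert (i, w) A) := by
  rintro j u u' (hu | hu) (hu' | hu') hc
  · obtain ⟨rfl, rfl⟩ := Prod.mk.inj hu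
    obtain ⟨-, rfl⟩ := Prod.mk.inj hu'
    exact Conflict.irrefl hc
  · obtain ⟨rfl, rfl⟩ := Prod.mk.inj hu
    exact hw u' hu' hc
  · obtain ⟨rfl, rfl⟩ := Prod.mk.inj hu'
    exact hw u hu hc.symm
  · exact hA j u u' hu hu' hc

theorem baseRules_mono (h : edb ⊆ edb') : P.baseRules edb ⊆ P.baseRules edb' := by
  rintro r (((⟨a, ha, rfl⟩ | hr) | hr) | hr)
  exacts [Or.inl (Or.inl (Or.inl ⟨a, h ha, rfl⟩)), Or.inl (Or.inl (Or.inr hr)),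
    Or.inl (Or.inr hr), Or.inr hr]

theorem neg_eq_empty_of_mem_horn {r : GRule (FAtom S C)}
    (hr : r ∈ P.baseRules edb ∪ P.chosenRules A) : r.neg = ∅ := by
  rcases hr with (((⟨_, _, rfl⟩ | ⟨_, _, _, rfl⟩) | ⟨_, _, _, rfl⟩) |
    ⟨_, _, _, _, _, _, _, rfl⟩) | ⟨_, _, _, _, rfl⟩ <;> rfl

theorem isModel_hornModel : IsModel (P.baseRules edb ∪ P.chosenRules A) (P.hornModel edb A) :=
  isModel_leastModel fun _ => neg_eq_empty_of_mem_horn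

theorem head_mem_hornModel {r : GRule (FAtom S C)} (hr : r ∈ P.baseRules edb ∪ P.chosenRules A)
    (hpos : r.pos ⊆ P.hornModel edb A) : r.head ∈ P.hornModel edb A :=
  (isModel_hornModel r hr).head_mem (neg_eq_empty_of_mem_horn hr) hpos

theorem hornModel_induction {p : FAtom S C → Prop}
    (hp : ∀ r ∈ P.baseRules edb ∪ P.chosenRules A, r.pos ⊆ P.hornModel edb A →
      (∀ a ∈ r.pos, p a) → p r.head) {a : FAtom S C} (ha : a ∈ P.hornModel edb A) : p a :=
  leastModel_induction (fun _ => neg_eq_empty_of_mem_horn) hp ha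

theorem chosenSet_hornModel_subset : P.chosenSet (P.hornModel edb A) ⊆ A := by
  rintro ⟨i, w⟩ h
  refine hornModel_induction
    (p := fun x => ∀ q : Fin P.length × List C, x = FAtom.chosen q.1 q.2 → q ∈ A)
    ?_ h (i, w) rfl
  rintro r ((((⟨a, -, rfl⟩ | ⟨j, ν, -, rfl⟩) | ⟨j, ν, -, rfl⟩) |
    ⟨j, g, -, ν, ν', -, -, rfl⟩) | ⟨j, ν, -, hj, rfl⟩) - - ⟨k, u⟩ hx <;>
    simp only [reduceCtorEq, FAtom.chosen.injEq] at hx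
  obtain ⟨hk, rfl⟩ := hx
  rwa [← Fin.ext hk]

theorem diff_mem_hornModel_iff {i : Fin P.length} {w : List C} :
    FAtom.diff i w ∈ P.hornModel edb A ↔
      ∃ w', (i, w') ∈ P.chosenSet (P.hornModel edb A) ∧ P.Conflict i w w' := by
  constructor
  · intro h
    refine hornModel_induction (p := fun x => ∀ (k : Fin P.length) u, x = FAtom.diff k u →
      ∃ w', (k, w') ∈ P.chosenSet (P.hornModel edb A) ∧ P.Conflict k u w') ?_ h i w rfl
    rintro r ((((⟨a, -, rfl⟩ | ⟨j, ν, -, rfl⟩) | ⟨j, ν, -, rfl⟩) |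
      ⟨j, g, hg, ν, ν', hagree, hdiff, rfl⟩) | ⟨j, ν, -, -, rfl⟩) hpos - k u hx <;>
      simp only [reduceCtorEq, FAtom.diff.injEq] at hx
    obtain ⟨hk, rfl⟩ := hx
    obtain rfl := Fin.ext hk
    exact ⟨_, hpos (mem_singleton _), g, hg, ν, ν', rfl, rfl, hagree, hdiff⟩
  · rintro ⟨w', hw', g, hg, ν, ν', rfl, rfl, hagree, hdiff⟩
    exact head_mem_hornModel (Or.inl (Or.inr ⟨i, g, hg, ν, ν', hagree, hdiff, rfl⟩))
      (singleton_subset_iff.2 hw')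

theorem hornModel_subset_hornModel (hedb : edb ⊆ edb')
    (hA : A ∩ P.chosenSet (P.hornModel edb A) ⊆ B) :
    P.hornModel edb A ⊆ P.hornModel edb' B := by
  suffices IsModel (P.baseRules edb ∪ P.chosenRules A)
      (P.hornModel edb' B ∩ P.hornModel edb A) from
    (leastModel_subset this).trans inter_subset_left
  intro r hr hpos _
  have hhead := head_mem_hornModel hr (hpos.trans inter_subset_right)
  refine ⟨head_mem_hornModel ?_ (hpos.trans inter_subset_left), hhead⟩
  rcases hr with hr | ⟨j, ν, hne, hj, rfl⟩
  · exact Or.inl (baseRules_mono hedb hr)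
  · exact Or.inr ⟨j, ν, hne, hA ⟨hj, hhead⟩, rfl⟩

theorem hornModel_mono (h : A ⊆ B) : P.hornModel edb A ⊆ P.hornModel edb B :=
  hornModel_subset_hornModel Subset.rfl (inter_subset_left.trans h)

theorem negBody_eq_empty (hpos : P.Positive) (i : Fin P.length) (ν : ℕ → C) :
    negBody (P.get i) ν = ∅ := by
  rw [negBody, hpos _ (P.get_mem i)]
  simp

theorem reduct_foe (hpos : P.Positive) (X : Set (FAtom S C)) :
    reduct (foe P edb) X = P.baseRules edb ∪ P.chosenRules (P.unblocked X) := by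
  ext r
  constructor
  · rintro ⟨r', ((((⟨a, ha, rfl⟩ | ⟨i, ν, h, rfl⟩) | ⟨i, ν, h, rfl⟩) | ⟨i, ν, h, rfl⟩) |
      ⟨i, g, hg, ν, ν', hagree, hdiff, rfl⟩), hneg, rfl⟩
    exacts [Or.inl (Or.inl (Or.inl (Or.inl ⟨a, ha, rfl⟩))),
      Or.inl (Or.inl (Or.inl (Or.inr ⟨i, ν, h, rfl⟩))),
      Or.inl (Or.inl (Or.inr ⟨i, ν, h, rfl⟩)),
      Or.inr ⟨i, ν, h, hneg _ (mem_insert _ _), rfl⟩,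
      Or.inl (Or.inr ⟨i, g, hg, ν, ν', hagree, hdiff, rfl⟩)]
  · rintro ((((⟨a, ha, rfl⟩ | ⟨i, ν, h, rfl⟩) | ⟨i, ν, h, rfl⟩) |
      ⟨i, g, hg, ν, ν', hagree, hdiff, rfl⟩) | ⟨i, ν, h, hunbl, rfl⟩)
    · exact ⟨_, Or.inl (Or.inl (Or.inl (Or.inl ⟨a, ha, rfl⟩))), by simp, rfl⟩
    · exact ⟨_, Or.inl (Or.inl (Or.inl (Or.inr ⟨i, ν, h, rfl⟩))),
        by rw [negBody_eq_empty hpos]; simp, rfl⟩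
    · exact ⟨_, Or.inl (Or.inl (Or.inr ⟨i, ν, h, rfl⟩)),
        by rw [negBody_eq_empty hpos]; simp, rfl⟩
    · exact ⟨_, Or.inr ⟨i, g, hg, ν, ν', hagree, hdiff, rfl⟩, by simp, rfl⟩
    · exact ⟨_, Or.inl (Or.inr ⟨i, ν, h, rfl⟩),
        by rw [negBody_eq_empty hpos]; simpa [unblocked] using hunbl, rfl⟩

theorem isChoiceModel_iff (hpos : P.Positive) {X : Set (FAtom S C)} :
    IsChoiceModel P edb X ↔ X = P.hornModel edb (P.unblocked X) := by
  rw [IsChoiceModel, IsStableModel, reduct_foe hpos]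
  rfl

theorem subset_unblocked_hornModel (hA : P.ConflictFree A) :
    A ⊆ P.unblocked (P.hornModel edb A) := by
  rintro ⟨i, w⟩ hw hdiff
  obtain ⟨w', hw', hc⟩ := diff_mem_hornModel_iff.1 hdiff
  exact hA i w w' hw (chosenSet_hornModel_subset hw') hc

theorem conflictFree_chosenSet_hornModel (hA : A ⊆ P.unblocked (P.hornModel edb A)) :
    P.ConflictFree (P.chosenSet (P.hornModel edb A)) := fun _ _ w' hw hw' hc =>
  hA (chosenSet_hornModel_subset hw) (diff_mem_hornModel_iff.2 ⟨w', hw', hc⟩)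

theorem admissible_sUnion {c : Set (Set (Fin P.length × List C))}
    (hc : c ⊆ {A | P.Admissible edb A}) (hchain : IsChain (· ⊆ ·) c) :
    P.Admissible edb (⋃₀ c) := by
  refine ⟨?_, ?_⟩
  · rintro i w w' ⟨A, hA, hw⟩ ⟨B, hB, hw'⟩
    rcases hchain.total hA hB with hAB | hBA
    exacts [(hc hB).1 i w w' (hAB hw) hw', (hc hA).1 i w w' hw (hBA hw')]
  · rintro p ⟨A, hA, hp⟩
    exact hornModel_mono (subset_sUnion_of_mem hA) ((hc hA).2 hp)

theorem isModel_chosenRules_of_maximal (hmax : Maximal (P.Admissible edb) A) :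
    IsModel (P.chosenRules (P.unblocked (P.hornModel edb A))) (P.hornModel edb A) := by
  rintro _ ⟨j, ν, hne, hunbl, rfl⟩ hpos -
  have hsub : A ⊆ insert (j, (P.get j).W.map ν) A := subset_insert _ _
  have hins : P.Admissible edb (insert (j, (P.get j).W.map ν) A) := by
    refine ⟨hmax.prop.1.insert fun w' hw' hc =>
      hunbl (diff_mem_hornModel_iff.2 ⟨w', hmax.prop.2 hw', hc⟩), ?_⟩
    rintro p (rfl | hp)
    · exact head_mem_hornModel (Or.inr ⟨j, ν, hne, mem_insert _ _, rfl⟩)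
        (hpos.trans (hornModel_mono hsub))
    · exact hornModel_mono hsub (hmax.prop.2 hp)
  exact hmax.prop.2 (hmax.mem_of_prop_insert hins)

theorem isChoiceModel_hornModel_of_maximal (hpos : P.Positive)
    (hmax : Maximal (P.Admissible edb) A) : IsChoiceModel P edb (P.hornModel edb A) := by
  rw [isChoiceModel_iff hpos]
  refine (hornModel_mono (subset_unblocked_hornModel hmax.prop.1)).antisymm (leastModel_subset ?_)
  exact isModel_union_iff.2
    ⟨(isModel_union_iff.1 isModel_hornModel).1, isModel_chosenRules_of_maximal hmax⟩

theorem subset_hornModel_chosenSet {M : Set (FAtom S C)}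
    (hM : M = P.hornModel edb (P.unblocked M)) (hedb : edb ⊆ edb') :
    M ⊆ P.hornModel edb' (P.chosenSet M) := by
  rw [hM]
  exact hornModel_subset_hornModel hedb inter_subset_right

theorem admissible_chosenSet {M : Set (FAtom S C)}
    (hM : M = P.hornModel edb (P.unblocked M)) (hedb : edb ⊆ edb') :
    P.Admissible edb' (P.chosenSet M) := by
  have hfree := P.conflictFree_chosenSet_hornModel (A := P.unblocked M) (edb := edb)
    (by rw [← hM])
  rw [← hM] at hfree
  exact ⟨hfree, fun _ hp => subset_hornModel_chosenSet hM hedb hp⟩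

end CProgram

theorem positive_choice_program_monotonic_general
    {S : Schema} {C : Type}
    (P : CProgram S C) (hpos : P.Positive)
    (edb edb' : Set (GAtom S C)) (hsub : edb ⊆ edb')
    (M : Set (FAtom S C)) (hM : IsChoiceModel P edb M) :
    ∃ M' : Set (FAtom S C), IsChoiceModel P edb' M' ∧ M ⊆ M' := by
  rw [P.isChoiceModel_iff hpos] at hM
  obtain ⟨A, hMA, hmax⟩ := zorn_subset_nonempty {A | P.Admissible edb' A}
    (fun c hc hchain _ =>
      ⟨⋃₀ c, P.admissible_sUnion hc hchain, fun _ => subset_sUnion_of_mem⟩)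
    _ (P.admissible_chosenSet hM hsub)
  exact ⟨P.hornModel edb' A, P.isChoiceModel_hornModel_of_maximal hpos hmax,
    (P.subset_hornModel_chosenSet hM hsub).trans (P.hornModel_mono hMA)⟩

/-- For positive choice programs with the same intensional
rules `P` and extensional databases `edb ⊆ edb'`, every choice model `M` of
the first program extends to a choice model `M' ⊇ M` of the second: the
multi-valued mapping from `edb` to choice models is monotonic. -/
theorem positive_choice_program_monotonic
    {S : Schema} {C : Type} [Finite S.pred] [Finite C]
    (P : CProgram S C) (hpos : P.Positive)
    (edb edb' : Set (GAtom S C)) (hsub : edb ⊆ edb')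
    (M : Set (FAtom S C)) (hM : IsChoiceModel P edb M) :
    ∃ M' : Set (FAtom S C), IsChoiceModel P edb' M' ∧ M ⊆ M' :=
  positive_choice_program_monotonic_general P hpos edb edb' hsub M hM
end

section
/- For the rooted spanning-tree choice program—st(root,a); st(X,Y) ← st(_,X), g(X,Y), Y ≠ a, Y ≠ X, choice((Y),(X))—over any finite undirected graph g (each edge represented by both ordered pairs) in which every node is connected to the source node a, the st atoms of every choice model form a spanning tree of the graph rooted at a, and every nondeterministic query of this form is inexpressible in standard (deterministic) stratified Datalog. -/
/-- `σ` is a stratification of the program `P` (choice goals ignored). -/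
def StratifiedBy {S : Schema} {C : Type} (P : CProgram S C) (σ : S.pred → ℕ) : Prop :=
  ∀ r ∈ P, (∀ a ∈ r.pos, σ a.p ≤ σ r.head.p) ∧ (∀ a ∈ r.neg, σ a.p < σ r.head.p)

/-- `T` is a spanning tree, rooted at `a`, of the undirected graph with edge
set `E`: a set of directed edges of the graph in which every non-source node
of the graph has exactly one parent, no edge enters the source `a`, and every
node of the graph is reachable from `a`. -/
def IsSpanningTree {C : Type} (E : Set (C × C)) (a : C) (T : Set (C × C)) : Prop :=
  T ⊆ E ∧
  (∀ p ∈ T, p.2 ≠ a) ∧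
  (∀ y : C, (∃ z, (y, z) ∈ E) → y ≠ a → ∃! x, (x, y) ∈ T) ∧
  (∀ y : C, (∃ z, (y, z) ∈ E) →
    Relation.ReflTransGen (fun u v => (u, v) ∈ T) a y)

/-- Ground atoms of (the first-order equivalent of) the spanning-tree
program. -/
inductive StAtom (C : Type) : Type where
  | g (x y : C)
  | st (x y : C)
  | chosen (x y : C)
  | diff (x y : C)

/-- The ground first-order equivalent of the rooted spanning-tree choice
program on the graph `E` (in the `chosen`/`diffChoice` atoms, the first
argument is the value of `X` and the second that of `Y`; the choice goal
`choice((Y),(X))` yields the `diffChoice` rule below). -/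
def stProg {C : Type} (root a : C) (E : Set (C × C)) : GProgram (StAtom C) :=
  -- database facts g(x,y)
  {r | ∃ p ∈ E, r = ⟨.g p.1 p.2, ∅, ∅⟩} ∪
  -- st(root,a).
  {(⟨.st root a, ∅, ∅⟩ : GRule (StAtom C))} ∪
  -- st(X,Y) ← st(Z,X), g(X,Y), Y ≠ a, Y ≠ X, chosen(X,Y).
  {r | ∃ x y z, y ≠ a ∧ y ≠ x ∧
        r = ⟨.st x y, {.st z x, .g x y, .chosen x y}, ∅⟩} ∪
  -- chosen(X,Y) ← st(Z,X), g(X,Y), Y ≠ a, Y ≠ X, ¬diffChoice(X,Y).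
  {r | ∃ x y z, y ≠ a ∧ y ≠ x ∧
        r = ⟨.chosen x y, {.st z x, .g x y}, {.diff x y}⟩} ∪
  -- diffChoice(X,Y) ← chosen(X',Y), X ≠ X'.   [from choice((Y),(X))]
  {r | ∃ x x' y, x ≠ x' ∧ r = ⟨.diff x y, {.chosen x' y}, ∅⟩}

/-!
Stable models of the spanning-tree program are analysed by induction over derivations: every
`st` edge other than `st(root, a)` is supported by a `chosen` edge of the graph, the
`diffChoice` rule makes `chosen` functional in its second argument, and along any path from `a`
each node receives an `st` edge. Conversely, fixing a breadth-first parent function, the model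
that chooses exactly the parent edges is stable.

Inexpressibility is a genericity argument. The ground program of a stratified program without
choice has a unique stable model, and a permutation of the constants fixing those of the program
and the database maps stable models to stable models, so it fixes that model. On the 4-cycle
`1 - b - c - d - 1` with `b, d` not constants of the program, the swap of `b` and `d` fixes the
database, hence the computed tree, hence the parent of `c`, which must be `b` or `d`.
-/

section StableModels

variable {α β : Type} {P : GProgram α} {M : Set α}

theorem isModel_leastModel_reduct (P : GProgram α) (M : Set α) :
    IsModel (reduct P M) (leastModel (reduct P M)) := by
  rintro _ ⟨r, hr, hneg, rfl⟩ hpos - N hN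
  exact hN _ ⟨r, hr, hneg, rfl⟩ (hpos.trans (Set.sInter_subset_of_mem hN)) (by simp)

theorem isStableModel_iff :
    IsStableModel P M ↔ IsModel (reduct P M) M ∧ ∀ N, IsModel (reduct P M) N → M ⊆ N := by
  refine ⟨fun h => ⟨?_, fun N hN => ?_⟩, fun ⟨hM, hmin⟩ =>
    (hmin _ (isModel_leastModel_reduct P M)).antisymm (Set.sInter_subset_of_mem hM)⟩
  · have := isModel_leastModel_reduct P M
    rwa [← h] at this
  · rw [h]
    exact Set.sInter_subset_of_mem hN

theorem IsModel.head_mem_of_reduct {N : Set α} (hN : IsModel (reduct P M) N) {r : GRule α}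
    (hr : r ∈ P) (hneg : ∀ x ∈ r.neg, x ∉ M) (hpos : r.pos ⊆ N) : r.head ∈ N :=
  hN ⟨r.head, r.pos, ∅⟩ ⟨r, hr, hneg, rfl⟩ hpos (by simp)

namespace IsStableModel

theorem isModel_reduct (h : IsStableModel P M) : IsModel (reduct P M) M :=
  (isStableModel_iff.1 h).1

theorem isModel (h : IsStableModel P M) : IsModel P M :=
  fun _ hr hpos hneg => h.isModel_reduct.head_mem_of_reduct hr hneg hpos

theorem induction (h : IsStableModel P M) {S : Set α}
    (hS : ∀ r ∈ P, (∀ x ∈ r.neg, x ∉ M) → r.pos ⊆ M ∩ S → r.head ∈ S) : M ⊆ S := by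
  refine fun x hx => ((isStableModel_iff.1 h).2 (M ∩ S) ?_ hx).2
  rintro _ ⟨r, hr, hneg, rfl⟩ hpos -
  exact ⟨h.isModel_reduct.head_mem_of_reduct (r := r) hr hneg fun y hy => (hpos hy).1,
    hS r hr hneg hpos⟩

end IsStableModel

def GProgram.IsStratifiedBy (P : GProgram α) (f : α → ℕ) : Prop :=
  ∀ r ∈ P, (∀ x ∈ r.pos, f x ≤ f r.head) ∧ (∀ x ∈ r.neg, f x < f r.head)

theorem GProgram.IsStratifiedBy.subset_of_agree_below {f : α → ℕ} (hP : P.IsStratifiedBy f)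
    {N : Set α} (hM : IsStableModel P M) (hN : IsStableModel P N) (n : ℕ)
    (hagree : ∀ x, f x < n → (x ∈ M ↔ x ∈ N)) : ∀ x ∈ M, f x ≤ n → x ∈ N := by
  refine fun x hx => hM.induction (S := {x | f x ≤ n → x ∈ N}) ?_ hx
  intro r hr hneg hpos hle
  refine hN.isModel r hr (fun y hy => (hpos hy).2 ((hP r hr).1 y hy |>.trans hle)) ?_
  exact fun y hy hyN => hneg y hy ((hagree y (((hP r hr).2 y hy).trans_le hle)).2 hyN)

theorem GProgram.IsStratifiedBy.stableModel_unique {f : α → ℕ} (hP : P.IsStratifiedBy f)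
    {N : Set α} (hM : IsStableModel P M) (hN : IsStableModel P N) : M = N := by
  have hagree : ∀ n x, f x < n → (x ∈ M ↔ x ∈ N) := by
    intro n
    induction n with
    | zero => simp
    | succ n ih =>
      exact fun x hx => ⟨fun h => hP.subset_of_agree_below hM hN n ih x h (by omega),
        fun h => hP.subset_of_agree_below hN hM n (fun y hy => (ih y hy).symm) x h (by omega)⟩
  exact Set.ext fun x => hagree _ x (Nat.lt_succ_self _)

def GRule.map (f : α → β) (r : GRule α) : GRule β := ⟨f r.head, f '' r.pos, f '' r.neg⟩

theorem GRule.sat_map_iff (f : α → β) (r : GRule α) (N : Set β) :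
    (r.map f).Sat N ↔ r.Sat (f ⁻¹' N) := by
  simp only [GRule.Sat, GRule.map, Set.image_subset_iff, Set.forall_mem_image, Set.mem_preimage]

theorem isModel_image_iff (f : α → β) (N : Set β) :
    IsModel (GRule.map f '' P) N ↔ IsModel P (f ⁻¹' N) := by
  simp only [IsModel, Set.forall_mem_image, GRule.sat_map_iff]

theorem reduct_image (e : α ≃ β) :
    reduct (GRule.map e '' P) (e '' M) = GRule.map e '' reduct P M := by
  ext r
  simp only [reduct, Set.mem_image, Set.mem_ofPred_eq]
  constructor
  · rintro ⟨_, ⟨r, hr, rfl⟩, hneg, rfl⟩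
    refine ⟨_, ⟨r, hr, fun x hx hxM => hneg _ ⟨x, hx, rfl⟩ ⟨x, hxM, rfl⟩, rfl⟩, ?_⟩
    simp [GRule.map]
  · rintro ⟨_, ⟨r, hr, hneg, rfl⟩, rfl⟩
    refine ⟨_, ⟨r, hr, rfl⟩, ?_, by simp [GRule.map]⟩
    rintro _ ⟨x, hx, rfl⟩ ⟨y, hyM, hyx⟩
    exact hneg x hx (e.injective hyx ▸ hyM)

theorem leastModel_image (e : α ≃ β) : leastModel (GRule.map e '' P) = e '' leastModel P := by
  ext y
  simp only [leastModel, Set.mem_sInter, Set.mem_ofPred_eq, isModel_image_iff,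
    e.image_eq_preimage_symm, Set.mem_preimage]
  refine ⟨fun h N hN => ?_, fun h N hN => by simpa using h _ hN⟩
  simpa using h (e.symm ⁻¹' N) (by simpa [Set.preimage_preimage] using hN)

theorem GRule.image_map_symm (e : α ≃ β) (Q : GProgram β) :
    GRule.map e '' (GRule.map e.symm '' Q) = Q := by
  simp [Set.image_image, GRule.map]

theorem IsStableModel.image (e : α ≃ β) (h : IsStableModel P M) :
    IsStableModel (GRule.map e '' P) (e '' M) := by
  unfold IsStableModel at *
  rw [reduct_image, leastModel_image, ← h]

end StableModels

section SpanningTreeProgram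

variable {C : Type} {root a : C} {E : Set (C × C)} {M N : Set (StAtom C)} {x x' y z : C}

namespace IsModel

variable (hN : IsModel (reduct (stProg root a E) M) N)
include hN

theorem stProg_g_mem (h : (x, y) ∈ E) : StAtom.g x y ∈ N :=
  hN.head_mem_of_reduct (Or.inl (Or.inl (Or.inl (Or.inl ⟨(x, y), h, rfl⟩)))) (by simp) (by simp)

theorem stProg_st_root_mem : StAtom.st root a ∈ N :=
  hN.head_mem_of_reduct (Or.inl (Or.inl (Or.inl (Or.inr rfl)))) (by simp) (by simp)

theorem stProg_st_mem (hya : y ≠ a) (hyx : y ≠ x) (hz : StAtom.st z x ∈ N)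
    (hg : StAtom.g x y ∈ N) (hc : StAtom.chosen x y ∈ N) : StAtom.st x y ∈ N :=
  hN.head_mem_of_reduct (Or.inl (Or.inl (Or.inr ⟨x, y, z, hya, hyx, rfl⟩))) (by simp)
    (by simp [Set.insert_subset_iff, *])

theorem stProg_chosen_mem (hya : y ≠ a) (hyx : y ≠ x) (hd : StAtom.diff x y ∉ M)
    (hz : StAtom.st z x ∈ N) (hg : StAtom.g x y ∈ N) : StAtom.chosen x y ∈ N :=
  hN.head_mem_of_reduct (Or.inl (Or.inr ⟨x, y, z, hya, hyx, rfl⟩)) (by simpa using hd)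
    (by simp [Set.insert_subset_iff, *])

theorem stProg_diff_mem (hxx : x ≠ x') (hc : StAtom.chosen x' y ∈ N) : StAtom.diff x y ∈ N :=
  hN.head_mem_of_reduct (Or.inr ⟨x, x', y, hxx, rfl⟩) (by simp) (by simpa using hc)

end IsModel

theorem IsStableModel.stProg_induction (hM : IsStableModel (stProg root a E) M)
    {S : Set (StAtom C)} (hg : ∀ x y, (x, y) ∈ E → StAtom.g x y ∈ S)
    (hroot : StAtom.st root a ∈ S)
    (hst : ∀ x y z, y ≠ a → y ≠ x → StAtom.st z x ∈ M ∩ S → StAtom.g x y ∈ M ∩ S →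
      StAtom.chosen x y ∈ M ∩ S → StAtom.st x y ∈ S)
    (hchosen : ∀ x y z, y ≠ a → y ≠ x → StAtom.diff x y ∉ M → StAtom.st z x ∈ M ∩ S →
      StAtom.g x y ∈ M ∩ S → StAtom.chosen x y ∈ S)
    (hdiff : ∀ x x' y, x ≠ x' → StAtom.chosen x' y ∈ M ∩ S → StAtom.diff x y ∈ S) :
    M ⊆ S := by
  refine hM.induction fun r hr hneg hpos => ?_
  rcases hr with ((((⟨p, hp, rfl⟩ | rfl) | ⟨x, y, z, hya, hyx, rfl⟩) |
    ⟨x, y, z, hya, hyx, rfl⟩) | ⟨x, x', y, hxx, rfl⟩)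
  · exact hg _ _ hp
  · exact hroot
  · exact hst x y z hya hyx (hpos (by simp)) (hpos (by simp)) (hpos (by simp))
  · exact hchosen x y z hya hyx (hneg _ rfl) (hpos (by simp)) (hpos (by simp))
  · exact hdiff x x' y hxx (hpos rfl)

def stProgSupport (root a : C) (E : Set (C × C)) (M : Set (StAtom C)) : StAtom C → Prop
  | .g x y => (x, y) ∈ E
  | .st x y => (x = root ∧ y = a) ∨ ((x, y) ∈ E ∧ y ≠ a ∧ StAtom.chosen x y ∈ M)
  | .chosen x y => (x, y) ∈ E ∧ y ≠ a ∧ y ≠ x ∧ (∃ z, StAtom.st z x ∈ M) ∧ StAtom.diff x y ∉ M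
  | .diff x y => ∃ x', x' ≠ x ∧ StAtom.chosen x' y ∈ M

namespace IsStableModel

variable (hM : IsStableModel (stProg root a E) M)
include hM

theorem stProg_support : ∀ m ∈ M, stProgSupport root a E M m :=
  hM.stProg_induction (S := {m | stProgSupport root a E M m}) (fun _ _ h => h) (Or.inl ⟨rfl, rfl⟩)
    (fun _ _ _ hya _ _ hg hc => Or.inr ⟨hg.2, hya, hc.1⟩)
    (fun _ _ z hya hyx hd hz hg => ⟨hg.2, hya, hyx, ⟨z, hz.1⟩, hd⟩)
    (fun _ x' _ hxx hc => ⟨x', hxx.symm, hc.1⟩)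

theorem stProg_st_of_chosen (h : StAtom.chosen x y ∈ M) : StAtom.st x y ∈ M := by
  obtain ⟨hE, hya, hyx, ⟨z, hz⟩, -⟩ := hM.stProg_support _ h
  exact hM.isModel_reduct.stProg_st_mem hya hyx hz (hM.isModel_reduct.stProg_g_mem hE) h

theorem stProg_chosen_unique (h : StAtom.chosen x y ∈ M) (h' : StAtom.chosen x' y ∈ M) :
    x = x' := by
  by_contra hxx
  exact (hM.stProg_support _ h).2.2.2.2 (hM.isModel_reduct.stProg_diff_mem hxx h')

theorem stProg_exists_st_of_reachable
    (hy : Relation.ReflTransGen (fun u v => (u, v) ∈ E) a y) : ∃ x, StAtom.st x y ∈ M := by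
  induction hy with
  | refl => exact ⟨root, hM.isModel_reduct.stProg_st_root_mem⟩
  | @tail b c _ hbc ih =>
    obtain ⟨x, hx⟩ := ih
    by_cases hca : c = a
    · exact ⟨root, hca ▸ hM.isModel_reduct.stProg_st_root_mem⟩
    by_cases hcb : c = b
    · exact ⟨x, hcb ▸ hx⟩
    by_cases hd : StAtom.diff b c ∈ M
    · obtain ⟨x', -, hc⟩ := hM.stProg_support _ hd
      exact ⟨x', hM.stProg_st_of_chosen hc⟩
    · exact ⟨b, hM.stProg_st_of_chosen <| hM.isModel_reduct.stProg_chosen_mem hca hcb hd hx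
        (hM.isModel_reduct.stProg_g_mem hbc)⟩

variable (hroot : ∀ y, (root, y) ∉ E)
include hroot

theorem stProg_reachable_of_st (h : StAtom.st x y ∈ M) :
    Relation.ReflTransGen (fun u v => StAtom.st u v ∈ M ∧ u ≠ root) a y := by
  refine hM.stProg_induction (S := {m | ∀ x y, m = StAtom.st x y →
      Relation.ReflTransGen (fun u v => StAtom.st u v ∈ M ∧ u ≠ root) a y})
    (by simp) (fun _ _ h => by cases h; exact .refl) ?_ (by simp) (by simp) h x y rfl
  rintro x y z hya hyx ⟨hzM, hz⟩ ⟨hgM, -⟩ ⟨hcM, -⟩ _ _ ⟨⟩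
  have hE : (x, y) ∈ E := hM.stProg_support _ hgM
  exact (hz z x rfl).tail ⟨hM.isModel_reduct.stProg_st_mem hya hyx hzM hgM hcM,
    fun hx => hroot y (hx ▸ hE)⟩

theorem stProg_isSpanningTree
    (hconn : ∀ y, (∃ z, (y, z) ∈ E) → Relation.ReflTransGen (fun u v => (u, v) ∈ E) a y) :
    IsSpanningTree E a {p : C × C | StAtom.st p.1 p.2 ∈ M ∧ p.1 ≠ root} := by
  have hsound : ∀ x y, StAtom.st x y ∈ M → x ≠ root →
      (x, y) ∈ E ∧ y ≠ a ∧ StAtom.chosen x y ∈ M := by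
    intro x y h hx
    exact (hM.stProg_support _ h).resolve_left fun h => hx h.1
  refine ⟨fun p hp => (hsound _ _ hp.1 hp.2).1, fun p hp => (hsound _ _ hp.1 hp.2).2.1,
    fun y hy hya => ?_, fun y hy => ?_⟩
  · obtain ⟨x, hx⟩ := hM.stProg_exists_st_of_reachable (hconn y hy)
    have hxr : x ≠ root := by
      rintro rfl
      rcases hM.stProg_support _ hx with ⟨-, rfl⟩ | ⟨hE, -⟩
      exacts [hya rfl, hroot y hE]
    exact ⟨x, ⟨hx, hxr⟩, fun x' hx' => hM.stProg_chosen_unique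
      (hsound _ _ hx'.1 hx'.2).2.2 (hsound _ _ hx hxr).2.2⟩
  · obtain ⟨x, hx⟩ := hM.stProg_exists_st_of_reachable (hconn y hy)
    exact hM.stProg_reachable_of_st hroot hx

end IsStableModel

end SpanningTreeProgram

section BreadthFirst

variable {C : Type} {R : C → C → Prop} {a : C}

def reachWithin (R : C → C → Prop) (a : C) : ℕ → Set C
  | 0 => {a}
  | n + 1 => reachWithin R a n ∪ {y | ∃ x ∈ reachWithin R a n, R x y}

theorem reflTransGen_of_mem_reachWithin {n : ℕ} {y : C} (h : y ∈ reachWithin R a n) :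
    Relation.ReflTransGen R a y := by
  induction n generalizing y with
  | zero => exact h ▸ .refl
  | succ n ih =>
    rcases h with h | ⟨x, hx, hxy⟩
    exacts [ih h, (ih hx).tail hxy]

theorem exists_mem_reachWithin {y : C} (h : Relation.ReflTransGen R a y) :
    ∃ n, y ∈ reachWithin R a n := by
  induction h with
  | refl => exact ⟨0, rfl⟩
  | tail _ hbc ih =>
    obtain ⟨n, hn⟩ := ih
    exact ⟨n + 1, Or.inr ⟨_, hn, hbc⟩⟩

theorem exists_parent_of_reachable (R : C → C → Prop) (a : C) : ∃ (par : C → C) (d : C → ℕ), ∀ y,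
    Relation.ReflTransGen R a y → y ≠ a →
      R (par y) y ∧ Relation.ReflTransGen R a (par y) ∧ d (par y) < d y := by
  let d y := sInf {n | y ∈ reachWithin R a n}
  have hpar : ∀ y, ∃ x, Relation.ReflTransGen R a y → y ≠ a →
      R x y ∧ Relation.ReflTransGen R a x ∧ d x < d y := by
    intro y
    by_cases hy : Relation.ReflTransGen R a y ∧ y ≠ a
    swap
    · exact ⟨y, fun h1 h2 => absurd ⟨h1, h2⟩ hy⟩
    have hmem : y ∈ reachWithin R a (d y) := Nat.sInf_mem (exists_mem_reachWithin hy.1)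
    obtain ⟨m, hm⟩ : ∃ m, d y = m + 1 :=
      Nat.exists_eq_succ_of_ne_zero fun h => hy.2 (by rw [h] at hmem; exact hmem)
    rw [hm] at hmem
    rcases hmem with hmem | ⟨x, hx, hxy⟩
    · exact absurd hmem (Nat.notMem_of_lt_sInf (show m < d y by omega))
    · have hdx : d x ≤ m := Nat.sInf_le hx
      exact ⟨x, fun _ _ => ⟨hxy, reflTransGen_of_mem_reachWithin hx, by omega⟩⟩
  choose par hpar using hpar
  exact ⟨par, d, hpar⟩

end BreadthFirst

section SpanningTreeProgramModel

variable {C : Type} (root a : C) (E : Set (C × C)) (par : C → C)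

/-- The choice model in which the parent of every reachable node `y ≠ a` is `par y`. -/
def parentModel : Set (StAtom C) := {m | match m with
  | .g x y => (x, y) ∈ E
  | .st x y => (x = root ∧ y = a) ∨
      (Relation.ReflTransGen (fun u v => (u, v) ∈ E) a y ∧ y ≠ a ∧ x = par y)
  | .chosen x y => Relation.ReflTransGen (fun u v => (u, v) ∈ E) a y ∧ y ≠ a ∧ x = par y
  | .diff x y => Relation.ReflTransGen (fun u v => (u, v) ∈ E) a y ∧ y ≠ a ∧ x ≠ par y}

theorem isModel_reduct_parentModel :
    IsModel (reduct (stProg root a E) (parentModel root a E par)) (parentModel root a E par) := by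
  rintro _ ⟨r, hr, hneg, rfl⟩ hpos -
  rcases hr with ((((⟨p, hp, rfl⟩ | rfl) | ⟨x, y, z, hya, hyx, rfl⟩) |
    ⟨x, y, z, hya, hyx, rfl⟩) | ⟨x, x', y, hxx, rfl⟩)
  · exact hp
  · exact Or.inl ⟨rfl, rfl⟩
  · exact Or.inr (hpos (show StAtom.chosen x y ∈ _ by simp))
  · have hx : Relation.ReflTransGen (fun u v => (u, v) ∈ E) a x := by
      rcases hpos (show StAtom.st z x ∈ _ by simp) with ⟨-, rfl⟩ | ⟨hx, -⟩
      exacts [.refl, hx]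
    have hy := hx.tail (hpos (show StAtom.g x y ∈ _ by simp))
    exact ⟨hy, hya, by_contra fun hxp => hneg _ rfl ⟨hy, hya, hxp⟩⟩
  · obtain ⟨hy, hya, rfl⟩ := hpos (show StAtom.chosen x' y ∈ _ by simp)
    exact ⟨hy, hya, hxx⟩

variable {root a E par}

theorem parentModel_subset {d : C → ℕ}
    (hpar : ∀ y, Relation.ReflTransGen (fun u v => (u, v) ∈ E) a y → y ≠ a →
      (par y, y) ∈ E ∧ Relation.ReflTransGen (fun u v => (u, v) ∈ E) a (par y) ∧ d (par y) < d y)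
    {N : Set (StAtom C)} (hN : IsModel (reduct (stProg root a E) (parentModel root a E par)) N) :
    parentModel root a E par ⊆ N := by
  have key : ∀ n y, d y < n → Relation.ReflTransGen (fun u v => (u, v) ∈ E) a y → y ≠ a →
      StAtom.chosen (par y) y ∈ N ∧ StAtom.st (par y) y ∈ N := by
    intro n
    induction n with
    | zero => simp
    | succ n ih =>
      intro y hdy hy hya
      obtain ⟨hE, hp, hlt⟩ := hpar y hy hya
      have hyp : y ≠ par y := fun h => lt_irrefl (d y) (by rwa [← h] at hlt)
      obtain ⟨z, hz⟩ : ∃ z, StAtom.st z (par y) ∈ N := by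
        by_cases hpa : par y = a
        · exact ⟨root, hpa ▸ hN.stProg_st_root_mem⟩
        · exact ⟨_, (ih (par y) (by omega) hp hpa).2⟩
      have hc := hN.stProg_chosen_mem hya hyp (fun h => h.2.2 rfl) hz (hN.stProg_g_mem hE)
      exact ⟨hc, hN.stProg_st_mem hya hyp hz (hN.stProg_g_mem hE) hc⟩
  rintro (⟨x, y⟩ | ⟨x, y⟩ | ⟨x, y⟩ | ⟨x, y⟩) hm
  · exact hN.stProg_g_mem hm
  · rcases hm with ⟨rfl, rfl⟩ | ⟨hy, hya, rfl⟩
    exacts [hN.stProg_st_root_mem, (key _ y (Nat.lt_succ_self _) hy hya).2]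
  · obtain ⟨hy, hya, rfl⟩ := hm
    exact (key _ y (Nat.lt_succ_self _) hy hya).1
  · obtain ⟨hy, hya, hxp⟩ := hm
    exact hN.stProg_diff_mem hxp (key _ y (Nat.lt_succ_self _) hy hya).1

theorem stProg_exists_stableModel (root a : C) (E : Set (C × C)) :
    ∃ M, IsStableModel (stProg root a E) M := by
  obtain ⟨par, d, hpar⟩ := exists_parent_of_reachable (fun u v => (u, v) ∈ E) a
  exact ⟨parentModel root a E par, isStableModel_iff.2
    ⟨isModel_reduct_parentModel root a E par, fun _ hN => parentModel_subset hpar hN⟩⟩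

end SpanningTreeProgramModel

section AtomMaps

variable {S : Schema} {C D : Type}

def GAtom.map (f : C → D) (g : GAtom S C) : GAtom S D := ⟨g.p, f ∘ g.args⟩

def FAtom.map (f : C → D) : FAtom S C → FAtom S D
  | .base g => .base (g.map f)
  | .chosen r w => .chosen r (w.map f)
  | .diff r w => .diff r (w.map f)

theorem FAtom.map_map {D' : Type} (f : C → D) (f' : D → D') (x : FAtom S C) :
    (x.map f).map f' = x.map (f' ∘ f) := by
  cases x <;> simp [FAtom.map, GAtom.map, Function.comp_assoc]

theorem FAtom.map_id (x : FAtom S C) : x.map id = x := by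
  cases x <;> simp [FAtom.map, GAtom.map]

def FAtom.mapEquiv (π : C ≃ D) : FAtom S C ≃ FAtom S D where
  toFun := FAtom.map π
  invFun := FAtom.map π.symm
  left_inv x := by simp [FAtom.map_map, FAtom.map_id]
  right_inv x := by simp [FAtom.map_map, FAtom.map_id]

def Atom.consts (t : Atom S C) : Set C := {c | ∃ i, t.args i = .const c}

def CRule.consts (r : CRule S C) : Set C := ⋃ t ∈ r.head :: (r.pos ++ r.neg), t.consts

def CProgram.consts (Q : CProgram S C) : Set C := ⋃ r ∈ Q, r.consts

theorem Atom.consts_finite (t : Atom S C) : t.consts.Finite :=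
  ((Set.finite_range t.args).preimage fun _ _ _ _ h => Term.const.inj h).subset
    fun _ ⟨i, hi⟩ => ⟨i, hi⟩

theorem CProgram.consts_finite (Q : CProgram S C) : Q.consts.Finite :=
  (List.finite_toSet Q).biUnion fun _ _ =>
    (List.finite_toSet _).biUnion fun t _ => t.consts_finite

theorem Atom.ground_map {f : C → C} {t : Atom S C} (h : ∀ c ∈ t.consts, f c = c) (ν : ℕ → C) :
    (t.ground ν).map f = t.ground (f ∘ ν) := by
  simp only [GAtom.map, Atom.ground, GAtom.mk.injEq, heq_eq_eq, true_and]
  funext i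
  rcases hi : t.args i with v | c <;> simp only [Function.comp_apply, hi, Term.eval]
  exact h c ⟨i, hi⟩

theorem FAtom.map_image_groundings {f : C → C} {l : List (Atom S C)}
    (h : ∀ t ∈ l, ∀ c ∈ t.consts, f c = c) (ν : ℕ → C) :
    FAtom.map f '' {x | ∃ t ∈ l, x = .base (t.ground ν)} =
      {x | ∃ t ∈ l, x = .base (t.ground (f ∘ ν))} := by
  ext x
  constructor
  · rintro ⟨_, ⟨t, ht, rfl⟩, rfl⟩
    exact ⟨t, ht, congrArg FAtom.base (Atom.ground_map (h t ht) ν)⟩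
  · rintro ⟨t, ht, rfl⟩
    exact ⟨_, ⟨t, ht, rfl⟩, congrArg FAtom.base (Atom.ground_map (h t ht) ν)⟩

end AtomMaps

section Genericity

variable {S : Schema} {C : Type} {π : C → C} {r : CRule S C}

theorem CRule.ground_head_map (h : ∀ c ∈ r.consts, π c = c) (ν : ℕ → C) :
    (r.head.ground ν).map π = r.head.ground (π ∘ ν) :=
  Atom.ground_map (fun c hc => h c (Set.mem_iUnion₂.2 ⟨r.head, by simp, hc⟩)) ν

theorem CRule.image_posBody (h : ∀ c ∈ r.consts, π c = c) (ν : ℕ → C) :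
    FAtom.map π '' posBody r ν = posBody r (π ∘ ν) :=
  FAtom.map_image_groundings (fun t ht c hc => h c (Set.mem_iUnion₂.2 ⟨t, by simp [ht], hc⟩)) ν

theorem CRule.image_negBody (h : ∀ c ∈ r.consts, π c = c) (ν : ℕ → C) :
    FAtom.map π '' negBody r ν = negBody r (π ∘ ν) :=
  FAtom.map_image_groundings (fun t ht c hc => h c (Set.mem_iUnion₂.2 ⟨t, by simp [ht], hc⟩)) ν

theorem CRule.map_W (r : CRule S C) (ν : ℕ → C) : (r.W.map ν).map π = r.W.map (π ∘ ν) :=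
  List.map_map

theorem foe_image_subset {Q : CProgram S C} (edb : Set (GAtom S C)) {π : C ≃ C}
    (hπ : ∀ c ∈ Q.consts, π c = c) :
    GRule.map (FAtom.map π) '' foe Q edb ⊆ foe Q (GAtom.map π '' edb) := by
  have hfix : ∀ i : Fin Q.length, ∀ c ∈ (Q.get i).consts, π c = c :=
    fun i c hc => hπ c (Set.mem_iUnion₂.2 ⟨_, List.get_mem Q i, hc⟩)
  rintro _ ⟨_, hr, rfl⟩
  rcases hr with ((((⟨g, hg, rfl⟩ | ⟨i, ν, hnil, rfl⟩) | ⟨i, ν, hne, rfl⟩) |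
    ⟨i, ν, hne, rfl⟩) | ⟨i, cg, hcg, ν, ν', h1, h2, rfl⟩)
  · exact Or.inl (Or.inl (Or.inl (Or.inl ⟨g.map π, ⟨g, hg, rfl⟩, by simp [GRule.map, FAtom.map]⟩)))
  · refine Or.inl (Or.inl (Or.inl (Or.inr ⟨i, π ∘ ν, hnil, ?_⟩)))
    simp only [GRule.map, FAtom.map, CRule.ground_head_map (hfix i), CRule.image_posBody (hfix i),
      CRule.image_negBody (hfix i)]
  · refine Or.inl (Or.inl (Or.inr ⟨i, π ∘ ν, hne, ?_⟩))
    simp only [GRule.map, FAtom.map, Set.image_insert_eq, CRule.ground_head_map (hfix i),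
      CRule.image_posBody (hfix i), CRule.image_negBody (hfix i), CRule.map_W]
  · refine Or.inl (Or.inr ⟨i, π ∘ ν, hne, ?_⟩)
    simp only [GRule.map, FAtom.map, Set.image_insert_eq, CRule.image_posBody (hfix i),
      CRule.image_negBody (hfix i), CRule.map_W]
  · refine Or.inr ⟨i, cg, hcg, π ∘ ν, π ∘ ν', fun v hv => congrArg π (h1 v hv), ?_, ?_⟩
    · obtain ⟨v, hv, hne⟩ := h2
      exact ⟨v, hv, π.injective.ne hne⟩
    · simp only [GRule.map, FAtom.map, Set.image_singleton, Set.image_empty, CRule.map_W]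

theorem foe_image {Q : CProgram S C} (edb : Set (GAtom S C)) {π : C ≃ C}
    (hπ : ∀ c ∈ Q.consts, π c = c) :
    GRule.map (FAtom.map π) '' foe Q edb = foe Q (GAtom.map π '' edb) := by
  refine (foe_image_subset edb hπ).antisymm ?_
  have hπ' : ∀ c ∈ Q.consts, π.symm c = c := fun c hc => π.symm_apply_eq.2 (hπ c hc).symm
  have hedb : GAtom.map π.symm '' (GAtom.map π '' edb) = edb := by
    simp [Set.image_image, GAtom.map, ← Function.comp_assoc]
  have hsub := foe_image_subset (GAtom.map π '' edb) hπ'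
  rw [hedb] at hsub
  calc foe Q (GAtom.map π '' edb)
      = GRule.map (FAtom.mapEquiv π) '' (GRule.map (FAtom.mapEquiv π).symm ''
          foe Q (GAtom.map π '' edb)) := (GRule.image_map_symm _ _).symm
    _ ⊆ GRule.map (FAtom.map π) '' foe Q edb := Set.image_mono hsub

end Genericity

section Stratification

variable {S : Schema} {C : Type} {Q : CProgram S C}

def FAtom.rank (σ : S.pred → ℕ) : FAtom S C → ℕ
  | .base g => σ g.p
  | _ => 0

theorem foe_isStratifiedBy {σ : S.pred → ℕ} (hQ : ∀ r ∈ Q, r.cgoals = [])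
    (hσ : StratifiedBy Q σ) (edb : Set (GAtom S C)) :
    (foe Q edb).IsStratifiedBy (FAtom.rank σ) := by
  rintro _ ((((⟨g, -, rfl⟩ | ⟨i, ν, -, rfl⟩) | ⟨i, ν, hne, rfl⟩) |
    ⟨i, ν, hne, rfl⟩) | ⟨i, cg, hcg, ν, ν', -, -, rfl⟩)
  · simp
  · exact ⟨fun _ ⟨t, ht, h⟩ => h ▸ (hσ _ (List.get_mem Q i)).1 t ht,
      fun _ ⟨t, ht, h⟩ => h ▸ (hσ _ (List.get_mem Q i)).2 t ht⟩
  · exact absurd (hQ _ (List.get_mem Q i)) hne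
  · exact absurd (hQ _ (List.get_mem Q i)) hne
  · simp [FAtom.rank]

theorem foe_stableModel_image_eq {σ : S.pred → ℕ} (hQ : ∀ r ∈ Q, r.cgoals = [])
    (hσ : StratifiedBy Q σ) {edb : Set (GAtom S C)} {π : C ≃ C}
    (hπ : ∀ c ∈ Q.consts, π c = c) (hedb : GAtom.map π '' edb = edb)
    {M : Set (FAtom S C)} (hM : IsStableModel (foe Q edb) M) : FAtom.map π '' M = M := by
  have hπM : IsStableModel (GRule.map (FAtom.map π) '' foe Q edb) (FAtom.map π '' M) :=
    hM.image (FAtom.mapEquiv π)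
  rw [foe_image edb hπ, hedb] at hπM
  exact (foe_isStratifiedBy hQ hσ edb).stableModel_unique hπM hM

end Stratification

section Graphs

variable {S : Schema} {C : Type}

def GAtom.binary (p : S.pred) (x y : C) : GAtom S C := ⟨p, fun i => if (i : ℕ) = 0 then x else y⟩

theorem GAtom.map_binary (f : C → C) (p : S.pred) (x y : C) :
    (GAtom.binary p x y).map f = GAtom.binary p (f x) (f y) := by
  simp only [GAtom.map, GAtom.binary, GAtom.mk.injEq, heq_eq_eq, true_and]
  funext i
  split_ifs <;> simp [*]

def edgeFacts (p : S.pred) (E : Set (C × C)) : Set (GAtom S C) :=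
  {g | ∃ e ∈ E, g = GAtom.binary p e.1 e.2}

theorem image_edgeFacts (f : C → C) (p : S.pred) (E : Set (C × C)) :
    GAtom.map f '' edgeFacts p E = edgeFacts p (Prod.map f f '' E) := by
  ext g
  constructor
  · rintro ⟨_, ⟨e, he, rfl⟩, rfl⟩
    exact ⟨_, ⟨e, he, rfl⟩, GAtom.map_binary f p _ _⟩
  · rintro ⟨_, ⟨e, he, rfl⟩, rfl⟩
    exact ⟨_, ⟨e, he, rfl⟩, GAtom.map_binary f p _ _⟩

theorem IsSpanningTree.apply_parent_eq {E T : Set (C × C)} {a : C} (hT : IsSpanningTree E a T)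
    {π : C → C} (hπT : ∀ x y, (x, y) ∈ T → (π x, π y) ∈ T) {x y : C}
    (hy : ∃ z, (y, z) ∈ E) (hπy : π y = y) (hxy : (x, y) ∈ T) : π x = x := by
  obtain ⟨x₀, -, huniq⟩ := hT.2.2.1 y hy (hT.2.1 _ hxy)
  have hπxy := hπT x y hxy
  rw [hπy] at hπxy
  exact (huniq _ hπxy).trans (huniq _ hxy).symm

def completeBipartite (U V : Set C) : Set (C × C) := U ×ˢ V ∪ V ×ˢ U

theorem completeBipartite_swap {U V : Set C} {x y : C} (h : (x, y) ∈ completeBipartite U V) :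
    (y, x) ∈ completeBipartite U V := by
  rcases h with h | h
  exacts [Or.inr ⟨h.2, h.1⟩, Or.inl ⟨h.2, h.1⟩]

theorem completeBipartite_finite {U V : Set C} (hU : U.Finite) (hV : V.Finite) :
    (completeBipartite U V).Finite :=
  (hU.prod hV).union (hV.prod hU)

theorem image_completeBipartite (f : C → C) (U V : Set C) :
    Prod.map f f '' completeBipartite U V = completeBipartite (f '' U) (f '' V) := by
  simp only [completeBipartite, Set.image_union, Set.prodMap_image_prod]

theorem completeBipartite_reachable {U V : Set C} {a v y z : C} (ha : a ∈ U) (hv : v ∈ V)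
    (hy : (y, z) ∈ completeBipartite U V) :
    Relation.ReflTransGen (fun u w => (u, w) ∈ completeBipartite U V) a y := by
  have hav : (a, v) ∈ completeBipartite U V := Or.inl ⟨ha, hv⟩
  rcases hy with ⟨hy, -⟩ | ⟨hy, -⟩
  · have hvy : (v, y) ∈ completeBipartite U V := Or.inr ⟨hv, hy⟩
    exact .tail (.single hav) hvy
  · exact .single (Or.inl ⟨ha, hy⟩ : (a, y) ∈ completeBipartite U V)

end Graphs

theorem stratified_program_not_spanning_tree {S : Schema} {Q : CProgram S ℕ} {σ : S.pred → ℕ}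
    (hQ : ∀ r ∈ Q, r.cgoals = []) (hσ : StratifiedBy Q σ) (gp stp : S.pred) :
    ∃ E : Set (ℕ × ℕ), E.Finite ∧ (∀ x y, (x, y) ∈ E → (y, x) ∈ E) ∧
      (∀ y, (0, y) ∉ E ∧ (y, 0) ∉ E) ∧
      (∀ y, (∃ z, (y, z) ∈ E) → Relation.ReflTransGen (fun u v => (u, v) ∈ E) 1 y) ∧
      ∀ M, IsStableModel (foe Q (edgeFacts gp E)) M →
        ¬ IsSpanningTree E 1 {p | FAtom.base (GAtom.binary stp p.1 p.2) ∈ M} := by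
  obtain ⟨B, hB⟩ := Q.consts_finite.bddAbove
  let π := Equiv.swap (B + 2) (B + 4)
  have hπ : ∀ k ∈ Q.consts, π k = k := fun k hk =>
    Equiv.swap_apply_of_ne_of_ne (by have := hB hk; omega) (by have := hB hk; omega)
  let E := completeBipartite {1, B + 3} {B + 2, B + 4}
  have hπE : Prod.map π π '' E = E := by
    have h1 : π 1 = 1 := Equiv.swap_apply_of_ne_of_ne (by omega) (by omega)
    have h3 : π (B + 3) = B + 3 := Equiv.swap_apply_of_ne_of_ne (by omega) (by omega)
    rw [image_completeBipartite, Set.image_pair, Set.image_pair, h1, h3, Equiv.swap_apply_left,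
      Equiv.swap_apply_right, Set.pair_comm (B + 4)]
  refine ⟨E, completeBipartite_finite (Set.toFinite _) (Set.toFinite _),
    fun _ _ => completeBipartite_swap, fun y => ?_, fun y ⟨z, hz⟩ =>
    completeBipartite_reachable (v := B + 2) (by simp) (by simp) hz, fun M hM hT => ?_⟩
  · simp [E, completeBipartite]
  have hπM := foe_stableModel_image_eq hQ hσ hπ (by rw [image_edgeFacts, hπE]) hM
  have hπT : ∀ x y, FAtom.base (GAtom.binary stp x y) ∈ M →
      FAtom.base (GAtom.binary stp (π x) (π y)) ∈ M := fun x y h => by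
    rw [← hπM]
    exact ⟨_, h, congrArg FAtom.base (GAtom.map_binary π stp x y)⟩
  obtain ⟨x, hx, -⟩ := hT.2.2.1 (B + 3) ⟨B + 2, by simp [E, completeBipartite]⟩ (by omega)
  have hxbd : x = B + 2 ∨ x = B + 4 := by
    have := hT.1 hx
    simp [E, completeBipartite] at this
    omega
  have hπx := hT.apply_parent_eq hπT ⟨B + 2, by simp [E, completeBipartite]⟩
    (Equiv.swap_apply_of_ne_of_ne (by omega) (by omega)) hx
  rcases hxbd with rfl | rfl <;> simp [π] at hπx

/-- (1) Over any finite undirected graph `E` not incident to the fresh constant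
`root`, in which every node is connected to the source `a`, the spanning-tree
choice program has a choice model, and in every choice model `M` the `st`
atoms (other than `st(root,a)`) form a spanning tree of the graph rooted at
`a`.
(2) This nondeterministic query is not expressible in standard stratified
Datalog: no stratified Datalog program without choice (here over domain `ℕ`
with `root = 0` and `a = 1`, with a binary graph predicate `gp` and a binary
answer predicate `stp`) computes, on every such input graph, a spanning tree
rooted at `a` in each of its stable models. -/
theorem spanning_tree_choice_program_correct_and_not_expressible_without_choice :
    (∀ (C : Type) (root a : C) (E : Set (C × C)), root ≠ a → E.Finite →
      (∀ x y, (x, y) ∈ E → (y, x) ∈ E) →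
      (∀ y, (root, y) ∉ E ∧ (y, root) ∉ E) →
      (∀ y, (∃ z, (y, z) ∈ E) →
        Relation.ReflTransGen (fun u v => (u, v) ∈ E) a y) →
      (∃ M, IsStableModel (stProg root a E) M) ∧
      ∀ M, IsStableModel (stProg root a E) M →
        IsSpanningTree E a {p : C × C | StAtom.st p.1 p.2 ∈ M ∧ p.1 ≠ root}) ∧
    ¬ ∃ (S' : Schema) (Q : CProgram S' ℕ) (σ : S'.pred → ℕ) (gp stp : S'.pred),
        S'.ar gp = 2 ∧ S'.ar stp = 2 ∧
        (∀ r ∈ Q, r.cgoals = []) ∧ StratifiedBy Q σ ∧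
        ∀ E : Set (ℕ × ℕ), E.Finite →
          (∀ x y, (x, y) ∈ E → (y, x) ∈ E) →
          (∀ y, (0, y) ∉ E ∧ (y, 0) ∉ E) →
          (∀ y, (∃ z, (y, z) ∈ E) →
            Relation.ReflTransGen (fun u v => (u, v) ∈ E) 1 y) →
          (∃ M, IsStableModel
              (foe Q {ga | ∃ p ∈ E,
                ga = ⟨gp, fun i => if (i : ℕ) = 0 then p.1 else p.2⟩}) M) ∧
          ∀ M, IsStableModel
              (foe Q {ga | ∃ p ∈ E,
                ga = ⟨gp, fun i => if (i : ℕ) = 0 then p.1 else p.2⟩}) M →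
            IsSpanningTree E 1 {p : ℕ × ℕ |
              FAtom.base ⟨stp, fun i => if (i : ℕ) = 0 then p.1 else p.2⟩ ∈ M} := by
  refine ⟨fun C root a E _ _ _ hroot hconn => ⟨stProg_exists_stableModel root a E,
    fun M hM => hM.stProg_isSpanningTree (fun y => (hroot y).1) hconn⟩, ?_⟩
  rintro ⟨S', Q, σ, gp, stp, -, -, hQ, hσ, hall⟩
  obtain ⟨E, hfin, hsymm, hzero, hconn, hnot⟩ := stratified_program_not_spanning_tree hQ hσ gp stp
  obtain ⟨⟨M, hM⟩, htree⟩ := hall E hfin hsymm hzero hconn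
  exact hnot M hM (htree M hM)
end
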